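/- arXiv:1702.05611 — 2 statements merged into one kernel-verified Lean document; each statement's English description precedes it below -/
import Mathlib

section
/- Let t be a selfadjoint regular operator on a Hilbert C*-module E with Cayley transform C_t = (t-i)(t+i)^{-1}, bounded transform F_t = t(1+t^2)^{-1/2}, and Q_t = (1+t^2)^{-1/2}. Then I + C_t = 2 F_t (F_t - i Q_t). -/
/-! Framework: unbounded (regular) operators on Hilbert C⋆-modules, bounded adjointable
operators, compact operators, Fredholm operators, Cayley and bounded transforms. -/

open scoped RightActions InnerProductSpace

noncomputable section

namespace RegularFredholm

/-- The Hilbert C⋆-module class of the older Mathlib (`E` a right `A`-module, with `A`-valued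
inner product linear in the second variable); Mathlib's `CStarModule` is now a left-module
notion with another convention, so the original one is spelled out here. -/
class CStarModule (A E : Type*) [NonUnitalSemiring A] [StarRing A] [Module ℂ A]
    [AddCommGroup E] [Module ℂ E] [PartialOrder A] [SMul Aᵐᵒᵖ E] [Norm A] [Norm E]
    extends Inner A E where
  inner_add_right {x} {y} {z} : inner x (y + z) = inner x y + inner x z
  inner_self_nonneg {x} : 0 ≤ inner x x
  inner_self {x} : inner x x = 0 ↔ x = 0
  inner_op_smul_right {a : A} {x y : E} : inner x (y <• a) = inner x y * a
  inner_smul_right_complex {z : ℂ} {x} {y} : inner x (z • y) = z • inner x y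
  star_inner x y : star (inner x y) = inner y x
  norm_eq_sqrt_norm_inner_self x : ‖x‖ = √‖inner x x‖

section OppInstances

variable {A : Type*} [NonUnitalCStarAlgebra A] [PartialOrder A] [StarOrderedRing A]

/-- The opposite of a C⋆-algebra is star-ordered. -/
instance instStarOrderedRingMulOpposite : StarOrderedRing Aᵐᵒᵖ :=
  StarOrderedRing.of_le_iff <| by
    intro x y
    change MulOpposite.unop x ≤ MulOpposite.unop y ↔ _
    rw [← sub_nonneg, CStarAlgebra.nonneg_iff_eq_mul_star_self]
    constructor
    · rintro ⟨b, hb⟩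
      refine ⟨MulOpposite.op b, ?_⟩
      apply MulOpposite.unop_injective
      simp only [MulOpposite.unop_add, MulOpposite.unop_mul, MulOpposite.unop_star,
        MulOpposite.unop_op]
      rw [← hb]
      abel
    · rintro ⟨s, rfl⟩
      refine ⟨MulOpposite.unop s, ?_⟩
      simp

variable {E : Type*} [NormedAddCommGroup E] [NormedSpace ℂ E] [SMul Aᵐᵒᵖ E] [CStarModule A E]

/-- An old-style Hilbert C⋆-module over `A` is a (current Mathlib) `CStarModule` over `Aᵐᵒᵖ`. -/
@[reducible]
noncomputable def toCStarModuleOp : _root_.CStarModule Aᵐᵒᵖ E where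
  inner x y := MulOpposite.op (Inner.inner A x y)
  inner_add_right := by
    intro x y z
    simp [CStarModule.inner_add_right]
  inner_self_nonneg := by
    intro x
    exact CStarModule.inner_self_nonneg (A := A)
  inner_self := by
    intro x
    rw [MulOpposite.op_eq_zero_iff]
    exact CStarModule.inner_self (A := A)
  inner_op_smul_right := by
    intro a x y
    apply MulOpposite.unop_injective
    have := CStarModule.inner_op_smul_right (A := A) (a := MulOpposite.unop a) (x := x) (y := y)
    simpa using this
  inner_smul_right_complex := by
    intro z x y
    apply MulOpposite.unop_injective
    simpa using CStarModule.inner_smul_right_complex (A := A) (z := z) (x := x) (y := y)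
  star_inner x y := by
    apply MulOpposite.unop_injective
    simpa using CStarModule.star_inner (A := A) x y
  norm_eq_sqrt_norm_inner_self x := CStarModule.norm_eq_sqrt_norm_inner_self (A := A) x

attribute [local instance] toCStarModuleOp

/-- The norm on `E ⊕ E`, as in the older Mathlib. -/
noncomputable instance instNormedAddCommGroupProd : NormedAddCommGroup (WithCStarModule A (E × E)) :=
  inferInstanceAs (NormedAddCommGroup (WithCStarModule Aᵐᵒᵖ (E × E)))

noncomputable instance instNormedSpaceProd : NormedSpace ℂ (WithCStarModule A (E × E)) :=
  inferInstanceAs (NormedSpace ℂ (WithCStarModule Aᵐᵒᵖ (E × E)))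

/-- The Hilbert C⋆-module `E ⊕ E`, as in the older Mathlib. -/
noncomputable instance instCStarModuleProd : CStarModule A (WithCStarModule A (E × E)) where
  inner x y := Inner.inner A x.1 y.1 + Inner.inner A x.2 y.2
  inner_add_right := by
    intro x y z
    simp only [WithCStarModule.add_fst, WithCStarModule.add_snd, CStarModule.inner_add_right]
    abel
  inner_self_nonneg := add_nonneg CStarModule.inner_self_nonneg CStarModule.inner_self_nonneg
  inner_self := by
    intro x
    rw [add_eq_zero_iff_of_nonneg CStarModule.inner_self_nonneg CStarModule.inner_self_nonneg,
      CStarModule.inner_self, CStarModule.inner_self]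
    constructor
    · rintro ⟨h1, h2⟩
      apply (WithCStarModule.equiv A (E × E)).injective
      ext
      · simpa using h1
      · simpa using h2
    · rintro rfl
      exact ⟨WithCStarModule.zero_fst, WithCStarModule.zero_snd⟩
  inner_op_smul_right := by
    intro a x y
    simp only [WithCStarModule.smul_fst, WithCStarModule.smul_snd,
      CStarModule.inner_op_smul_right, add_mul]
  inner_smul_right_complex := by
    intro z x y
    simp only [WithCStarModule.smul_fst, WithCStarModule.smul_snd,
      CStarModule.inner_smul_right_complex, smul_add]
  star_inner x y := by
    simp only [star_add, CStarModule.star_inner]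
  norm_eq_sqrt_norm_inner_self x := rfl

end OppInstances

/-- An unbounded operator on `E`: a (not necessarily closed) domain together with a
linear map into `E`. -/
structure UnboundedOp (A : Type*) [NonUnitalCStarAlgebra A] [PartialOrder A]
    [StarOrderedRing A] (E : Type*) [NormedAddCommGroup E] [NormedSpace ℂ E]
    [SMul Aᵐᵒᵖ E] [CStarModule A E] where
  dom : Submodule ℂ E
  toFun : dom →ₗ[ℂ] E

section Defs

variable {A : Type*} [NonUnitalCStarAlgebra A] [PartialOrder A] [StarOrderedRing A]
variable {E : Type*} [NormedAddCommGroup E] [NormedSpace ℂ E] [SMul Aᵐᵒᵖ E] [CStarModule A E]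

namespace UnboundedOp

variable (t s : UnboundedOp A E)

/-- Application of an unbounded operator at a point of its domain. -/
def app (x : E) (hx : x ∈ t.dom) : E := t.toFun ⟨x, hx⟩

/-- `t` is densely defined. -/
def DenselyDefined : Prop := Dense (t.dom : Set E)

/-- The graph of `t` as a subset of `E × E`. -/
def graph : Set (E × E) := {p | ∃ hx : p.1 ∈ t.dom, t.app p.1 hx = p.2}

/-- `t` is a closed operator. -/
def IsClosedOp : Prop := IsClosed t.graph

/-- `t'` is the adjoint of `t`: it is a formal adjoint which is maximal among formal
adjoints. -/
def IsAdjoint (t' : UnboundedOp A E) : Prop :=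
  (∀ x (hx : x ∈ t.dom) y (hy : y ∈ t'.dom),
      (⟪t.app x hx, y⟫_A : A) = ⟪x, t'.app y hy⟫_A) ∧
  ∀ y z : E, (∀ x (hx : x ∈ t.dom), (⟪t.app x hx, y⟫_A : A) = ⟪x, z⟫_A) →
    ∃ hy : y ∈ t'.dom, t'.app y hy = z

/-- `t` is a regular operator with adjoint `t'`: it is closed, densely defined, has
densely defined adjoint `t'`, and `1 + t'∘t` (i.e. `1 + t⋆t`) has dense range. -/
def IsRegularPair (t' : UnboundedOp A E) : Prop :=
  t.DenselyDefined ∧ t.IsClosedOp ∧ t.IsAdjoint t' ∧ t'.DenselyDefined ∧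
    Dense {y : E | ∃ (x : E) (hx : x ∈ t.dom) (hx' : t.app x hx ∈ t'.dom),
      y = x + t'.app (t.app x hx) hx'}

/-- `t` is a selfadjoint regular operator. -/
def IsSelfAdjointRegular : Prop := t.IsRegularPair t

/-- The sum of an unbounded operator and a bounded operator, with the same domain. -/
def addBounded (D : E →L[ℂ] E) : UnboundedOp A E where
  dom := t.dom
  toFun := t.toFun + (D : E →ₗ[ℂ] E) ∘ₗ t.dom.subtype

/-- The sum of two unbounded operators, with domain the intersection of the domains. -/
def add : UnboundedOp A E where
  dom := t.dom ⊓ s.dom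
  toFun := t.toFun ∘ₗ Submodule.inclusion inf_le_left +
    s.toFun ∘ₗ Submodule.inclusion inf_le_right

/-- A bounded operator regarded as an unbounded operator with full domain. -/
def ofCLM (T : E →L[ℂ] E) : UnboundedOp A E where
  dom := ⊤
  toFun := (T : E →ₗ[ℂ] E) ∘ₗ (⊤ : Submodule ℂ E).subtype

/-- `R` is the (two-sided) inverse of `t + c` for a scalar `c`, i.e. `R = (t + c)⁻¹`. -/
def IsResolvent (c : ℂ) (R : E →L[ℂ] E) : Prop :=
  (∀ x : E, ∃ h : R x ∈ t.dom, t.app (R x) h + c • R x = x) ∧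
  ∀ x (hx : x ∈ t.dom), R (t.app x hx + c • x) = x

/-- `R` is the (two-sided) inverse of `1 + t'∘t`, i.e. `R = (1 + t⋆t)⁻¹`
(for `t` with adjoint `t'`). -/
def IsResolventSq (t' : UnboundedOp A E) (R : E →L[ℂ] E) : Prop :=
  (∀ x : E, ∃ (h : R x ∈ t.dom) (h' : t.app (R x) h ∈ t'.dom),
      t'.app (t.app (R x) h) h' + R x = x) ∧
  ∀ x (hx : x ∈ t.dom) (hx' : t.app x hx ∈ t'.dom),
    R (x + t'.app (t.app x hx) hx') = x

/-- `C` is the Cayley transform of `t`, namely `C = (t - i)(t + i)⁻¹`. -/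
def IsCayley (C : E →L[ℂ] E) : Prop :=
  ∃ R : E →L[ℂ] E, t.IsResolvent Complex.I R ∧
    ∀ x : E, ∃ h : R x ∈ t.dom, C x = t.app (R x) h - Complex.I • R x

/-- `Q` is the operator `(1 + t⋆t)^(-1/2)` (with `t'` the adjoint of `t`): `Q` is a
positive selfadjoint bounded operator whose square is the inverse of `1 + t'∘t`. -/
def IsSqrtResolvent (t' : UnboundedOp A E) (Q : E →L[ℂ] E) : Prop :=
  (∀ x y : E, (⟪Q x, y⟫_A : A) = ⟪x, Q y⟫_A) ∧ (∀ x : E, (0 : A) ≤ ⟪x, Q x⟫_A) ∧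
    t.IsResolventSq t' (Q.comp Q)

/-- `F` is the bounded transform `t ∘ Q` of `t`, where `Q = (1 + t⋆t)^(-1/2)`. -/
def IsBoundedTransform (Q F : E →L[ℂ] E) : Prop :=
  ∀ x : E, ∃ h : Q x ∈ t.dom, F x = t.app (Q x) h

end UnboundedOp

end Defs

section BoundedDefs

variable (A : Type*) [NonUnitalCStarAlgebra A] [PartialOrder A] [StarOrderedRing A]
variable {E : Type*} [NormedAddCommGroup E] [NormedSpace ℂ E] [SMul Aᵐᵒᵖ E] [CStarModule A E]

/-- `S` is an adjoint for the bounded operator `T`. -/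
def IsAdjointableB (T S : E →L[ℂ] E) : Prop :=
  ∀ x y : E, (⟪T x, y⟫_A : A) = ⟪x, S y⟫_A

/-- `T` is a bounded adjointable operator. -/
def Adjointable (T : E →L[ℂ] E) : Prop := ∃ S : E →L[ℂ] E, IsAdjointableB A T S

/-- `T` is a "rank one" operator `θ_{x,y} : z ↦ x • ⟪y, z⟫`. -/
def IsRankOne (T : E →L[ℂ] E) : Prop :=
  ∃ x y : E, ∀ z : E, T z = x <• (⟪y, z⟫_A : A)

/-- `T` is a compact operator: it belongs to the closed linear span of the rank one
operators. -/
def IsCompactOp (T : E →L[ℂ] E) : Prop :=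
  T ∈ closure (Submodule.span ℂ {S : E →L[ℂ] E | IsRankOne A S} : Set (E →L[ℂ] E))

/-- `T` is a Fredholm bounded adjointable operator: `T` is adjointable and invertible
modulo the compact operators. -/
def IsFredholmB (T : E →L[ℂ] E) : Prop :=
  Adjointable A T ∧ ∃ G : E →L[ℂ] E, Adjointable A G ∧
    IsCompactOp A (G * T - 1) ∧ IsCompactOp A (T * G - 1)

/-- `U` is a unitary element of the bounded adjointable operators. -/
def IsUnitaryB (U : E →L[ℂ] E) : Prop :=
  ∃ U' : E →L[ℂ] E, IsAdjointableB A U U' ∧ U' * U = 1 ∧ U * U' = 1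

end BoundedDefs

section MoreDefs

variable {A : Type*} [NonUnitalCStarAlgebra A] [PartialOrder A] [StarOrderedRing A]
variable {E : Type*} [NormedAddCommGroup E] [NormedSpace ℂ E] [SMul Aᵐᵒᵖ E] [CStarModule A E]

/-- A regular operator `t` (with adjoint `t'`) is Fredholm if its bounded transform
`F_t = t (1 + t⋆t)^(-1/2)` is a Fredholm bounded adjointable operator. -/
def UnboundedOp.IsFredholm (t t' : UnboundedOp A E) : Prop :=
  ∃ Q F : E →L[ℂ] E, t.IsSqrtResolvent t' Q ∧ t.IsBoundedTransform Q F ∧ IsFredholmB A F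

/-- `s` is relatively `t`-compact: the map `s : E(t) → E`, where `E(t)` is the domain of
`t` equipped with the graph inner product `⟪x,y⟫ + ⟪t x, t y⟫`, lies in the closed linear
span of the rank one operators `E(t) → E`; i.e. it can be approximated, in the operator
norm for maps `E(t) → E`, by finite sums of operators
`θ_{x,y} : z ↦ x • (⟪y, z⟫ + ⟪t y, t z⟫)` with `x ∈ E`, `y ∈ E(t)`. -/
def IsRelativelyCompact (t s : UnboundedOp A E) (hsub : t.dom ≤ s.dom) : Prop :=
  ∀ ε > (0 : ℝ), ∃ (n : ℕ) (x : Fin n → E) (y : Fin n → E) (hy : ∀ i, y i ∈ t.dom),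
    ∀ z (hz : z ∈ t.dom),
      ‖s.app z (hsub hz) - ∑ i, x i <•
          ((⟪y i, z⟫_A : A) + ⟪t.app (y i) (hy i), t.app z hz⟫_A)‖ ≤
        ε * Real.sqrt ‖(⟪z, z⟫_A : A) + ⟪t.app z hz, t.app z hz⟫_A‖

/-- The graph of `t` inside the Hilbert C⋆-module `E ⊕ E`. -/
def graphSet (t : UnboundedOp A E) : Set (WithCStarModule A (E × E)) :=
  {p | ∃ hx : (WithCStarModule.equiv A (E × E) p).1 ∈ t.dom,
    t.app (WithCStarModule.equiv A (E × E) p).1 hx = (WithCStarModule.equiv A (E × E) p).2}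

/-- `P` is the orthogonal projection of `E ⊕ E` onto the graph of `t`: a selfadjoint
idempotent whose range is the graph of `t`.  The gap metric between regular operators
`t`, `s` is `‖P_{G(t)} - P_{G(s)}‖` for the associated graph projections. -/
def IsGraphProjection (t : UnboundedOp A E)
    (P : WithCStarModule A (E × E) →L[ℂ] WithCStarModule A (E × E)) : Prop :=
  IsAdjointableB A P P ∧ P * P = P ∧ Set.range P = graphSet t

end MoreDefs

variable {A : Type*} [NonUnitalCStarAlgebra A] [PartialOrder A] [StarOrderedRing A]
variable {E : Type*} [NormedAddCommGroup E] [NormedSpace ℂ E] [SMul Aᵐᵒᵖ E] [CStarModule A E]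

/-! Since `C = 1 - 2i(t + i)⁻¹` and `(t + i)⁻¹ = (t - i)Q²`, one has `1 + C = 2t(t + i)⁻¹ =
2(1 - Q² - i tQ²)`, while `F(F - iQ) = F² - i tQ²`. So everything reduces to `F² = 1 - Q²`, that is,
to `Q` commuting with `F = tQ`; a priori only `Q² = (1 + t²)⁻¹` commutes with `t`. The commutator
`N = QF - FQ` is symmetric and anticommutes with `Q`, so `QN² = -NQN ≤ 0`. On the other hand `QN²`
is a product of commuting positive operators, hence positive (by the classical iteration
`Gₙ₊₁ = Gₙ - Gₙ²`, which tends to `0` while `⟪x, QGₙ x⟫` decreases). Thus `⟪Nx, QNx⟫ = 0`, so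
`QN = 0`, `Q²N = 0` and `N = 0`. -/

section InnerLemmas

attribute [local instance] toCStarModuleOp

namespace CStarModule

lemma inner_eq_unop (x y : E) : (⟪x, y⟫_A : A) = MulOpposite.unop (inner Aᵐᵒᵖ x y) := rfl

lemma inner_add_left {x y z : E} : (⟪x + y, z⟫_A : A) = ⟪x, z⟫_A + ⟪y, z⟫_A := by
  simp only [inner_eq_unop, _root_.CStarModule.inner_add_left, MulOpposite.unop_add]

lemma inner_sub_left {x y z : E} : (⟪x - y, z⟫_A : A) = ⟪x, z⟫_A - ⟪y, z⟫_A := by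
  simp only [inner_eq_unop, _root_.CStarModule.inner_sub_left, MulOpposite.unop_sub]

lemma inner_sub_right {x y z : E} : (⟪x, y - z⟫_A : A) = ⟪x, y⟫_A - ⟪x, z⟫_A := by
  simp only [inner_eq_unop, _root_.CStarModule.inner_sub_right, MulOpposite.unop_sub]

lemma inner_zero_right {x : E} : (⟪x, 0⟫_A : A) = 0 := by
  simp only [inner_eq_unop, _root_.CStarModule.inner_zero_right, MulOpposite.unop_zero]

lemma inner_neg_right {x y : E} : (⟪x, -y⟫_A : A) = -⟪x, y⟫_A := by
  simp only [inner_eq_unop, _root_.CStarModule.inner_neg_right, MulOpposite.unop_neg]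

lemma inner_smul_left_real {r : ℝ} {x y : E} : (⟪r • x, y⟫_A : A) = r • ⟪x, y⟫_A := by
  simp only [inner_eq_unop, _root_.CStarModule.inner_smul_left_real, MulOpposite.unop_smul]

lemma inner_smul_right_real {r : ℝ} {x y : E} : (⟪x, r • y⟫_A : A) = r • ⟪x, y⟫_A := by
  simp only [inner_eq_unop, _root_.CStarModule.inner_smul_right_real, MulOpposite.unop_smul]

variable (A) in
lemma norm_sq_eq (x : E) : ‖x‖ ^ 2 = ‖(⟪x, x⟫_A : A)‖ := by
  rw [norm_eq_sqrt_norm_inner_self (A := A) x, Real.sq_sqrt (norm_nonneg _)]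

lemma norm_inner_le (x y : E) : ‖(⟪x, y⟫_A : A)‖ ≤ ‖x‖ * ‖y‖ := by
  rw [inner_eq_unop, MulOpposite.norm_unop]
  exact _root_.CStarModule.norm_inner_le E

variable (A) in
lemma continuous_inner_right (x : E) : Continuous fun y : E => (⟪x, y⟫_A : A) :=
  MulOpposite.continuous_unop.comp
    (_root_.CStarModule.continuous_inner.comp (continuous_const.prodMk continuous_id))

lemma inner_sub_sub_self_le (x y : E) :
    (⟪x - y, x - y⟫_A : A) ≤ (2 : ℝ) • ⟪x, x⟫_A + (2 : ℝ) • ⟪y, y⟫_A := by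
  have hxy : (2 : ℝ) • (⟪x, x⟫_A : A) + (2 : ℝ) • ⟪y, y⟫_A
      = ⟪x - y, x - y⟫_A + ⟪x + y, x + y⟫_A := by
    simp only [inner_sub_left, inner_sub_right, inner_add_left, inner_add_right]
    module
  rw [hxy]
  exact le_add_of_nonneg_right CStarModule.inner_self_nonneg

end CStarModule

end InnerLemmas

section PositiveOperators

open Filter Topology

variable (A) in
def IsPositiveB (T : E →L[ℂ] E) : Prop :=
  IsAdjointableB A T T ∧ ∀ x : E, (0 : A) ≤ ⟪x, T x⟫_A

def subMulSelf {R : Type*} [Ring R] (a : R) : R := a - a * a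

lemma subMulSelf_iterate_half_mem (n : ℕ) :
    subMulSelf^[n] (1 / 2 : ℝ) ∈ Set.Icc 0 (1 / ((n : ℝ) + 2)) := by
  induction n with
  | zero => norm_num
  | succ n ih =>
    obtain ⟨h0, h1⟩ := ih
    rw [Function.iterate_succ_apply']
    set a := subMulSelf^[n] (1 / 2 : ℝ)
    have hn : (0 : ℝ) < n + 2 := by positivity
    have hv : 1 / ((n : ℝ) + 2) ≤ 1 / 2 := by
      rw [div_le_div_iff₀ hn (by norm_num)]; linarith
    refine ⟨by unfold subMulSelf; nlinarith, ?_⟩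
    -- `a ↦ a - a²` is increasing on `[0, 1/2]`
    calc subMulSelf a ≤ 1 / (n + 2) - 1 / (n + 2) * (1 / (n + 2)) := by
          unfold subMulSelf; nlinarith
      _ ≤ 1 / ((n + 1 : ℕ) + 2) := by
          push_cast
          rw [div_mul_div_comm, div_sub_div _ _ hn.ne' (by positivity),
            div_le_div_iff₀ (by positivity) (by positivity)]
          nlinarith

lemma tendsto_subMulSelf_iterate_half :
    Tendsto (fun n : ℕ => subMulSelf^[n] (1 / 2 : ℝ)) atTop (𝓝 0) := by
  refine squeeze_zero (fun n => (subMulSelf_iterate_half_mem n).1) (fun n => ?_)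
    tendsto_one_div_add_atTop_nhds_zero_nat
  refine (subMulSelf_iterate_half_mem n).2.trans ?_
  gcongr
  norm_num

lemma _root_.Commute.subMulSelf_iterate {R : Type*} [Ring R] {a b : R} (h : Commute a b) (n : ℕ) :
    Commute a (subMulSelf^[n] b) := by
  induction n with
  | zero => exact h
  | succ n ih =>
    rw [Function.iterate_succ_apply']
    exact ih.sub_right (ih.mul_right ih)

lemma IsAdjointableB.inner_sub_mul_self_apply_le {T : E →L[ℂ] E} (hT : IsAdjointableB A T T)
    {u : ℝ} (hu : u ≤ 1 / 2) (hle : ∀ x : E, (⟪x, T x⟫_A : A) ≤ u • ⟪x, x⟫_A) (x : E) :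
    (⟪x, subMulSelf T x⟫_A : A) ≤ subMulSelf u • ⟪x, x⟫_A := by
  set b : E := u • x - T x
  -- completing the square around `u • x`
  have hsq : subMulSelf u • (⟪x, x⟫_A : A) - ⟪x, subMulSelf T x⟫_A
      = ⟪b, b⟫_A + (1 - 2 * u) • ⟪x, b⟫_A := by
    simp only [b, subMulSelf, sub_apply, mul_apply_eq_comp, CStarModule.inner_sub_left,
      CStarModule.inner_sub_right, CStarModule.inner_smul_left_real,
      CStarModule.inner_smul_right_real, hT x x, hT x (T x)]
    module
  have hxb : (0 : A) ≤ ⟪x, b⟫_A := by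
    simpa only [b, CStarModule.inner_sub_right, CStarModule.inner_smul_right_real, sub_nonneg]
      using hle x
  rw [← sub_nonneg, hsq]
  exact add_nonneg CStarModule.inner_self_nonneg (smul_nonneg (by linarith) hxb)

namespace IsPositiveB

variable {T Q G N : E →L[ℂ] E}

lemma subMulSelf_of_le_one (hT : IsPositiveB A T) (hle : ∀ x : E, (⟪x, T x⟫_A : A) ≤ ⟪x, x⟫_A) :
    IsPositiveB A (subMulSelf T) := by
  refine ⟨fun x y => ?_, fun x => ?_⟩
  · simp only [subMulSelf, sub_apply, mul_apply_eq_comp, CStarModule.inner_sub_left,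
      CStarModule.inner_sub_right, hT.1 _ y, hT.1 x]
  · -- `T - T²` is the sum of `T (1 - T) T` and `(1 - T) T (1 - T)`
    have hsplit : (⟪x, subMulSelf T x⟫_A : A)
        = (⟪T x, T x⟫_A - ⟪T x, T (T x)⟫_A) + ⟪x - T x, T (x - T x)⟫_A := by
      simp only [subMulSelf, sub_apply, mul_apply_eq_comp, map_sub, CStarModule.inner_sub_left,
        CStarModule.inner_sub_right]
      abel
    rw [hsplit]
    exact add_nonneg (sub_nonneg.mpr (hle (T x))) (hT.2 _)

lemma norm_apply_sq_le (hT : IsPositiveB A T) {u : ℝ} (hu0 : 0 ≤ u) (hu1 : u ≤ 1)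
    (hle : ∀ x : E, (⟪x, T x⟫_A : A) ≤ u • ⟪x, x⟫_A) (x : E) :
    ‖T x‖ ^ 2 ≤ u * ‖x‖ ^ 2 := by
  have hle1 : ∀ y : E, (⟪y, T y⟫_A : A) ≤ ⟪y, y⟫_A :=
    fun y => (hle y).trans (smul_le_of_le_one_left CStarModule.inner_self_nonneg hu1)
  have hsq : (⟪T x, T x⟫_A : A) ≤ ⟪x, T x⟫_A := by
    have := (hT.subMulSelf_of_le_one hle1).2 x
    simp only [subMulSelf, sub_apply, mul_apply_eq_comp, CStarModule.inner_sub_right,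
      sub_nonneg] at this
    rwa [hT.1 x]
  calc ‖T x‖ ^ 2 = ‖(⟪T x, T x⟫_A : A)‖ := CStarModule.norm_sq_eq A _
    _ ≤ ‖u • (⟪x, x⟫_A : A)‖ :=
      CStarAlgebra.norm_le_norm_of_nonneg_of_le CStarModule.inner_self_nonneg (hsq.trans (hle x))
    _ = u * ‖x‖ ^ 2 := by rw [norm_smul, CStarModule.norm_sq_eq A x, Real.norm_of_nonneg hu0]

lemma apply_eq_zero_of_inner_eq_zero (hT : IsPositiveB A T) {y : E}
    (hy : (⟪y, T y⟫_A : A) = 0) : T y = 0 := by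
  set b : A := ⟪T y, T y⟫_A
  set s : ℝ := ‖T‖ + 1
  -- `0 ≤ ⟪T y - s • y, T (T y - s • y)⟫ = ⟪T y, T (T y)⟫ - 2 s ⟪T y, T y⟫`
  have hb : (2 * s) • b ≤ ⟪T y, T (T y)⟫_A := by
    have := hT.2 (T y - s • y)
    simp only [map_sub, ContinuousLinearMap.map_smul_of_tower, CStarModule.inner_sub_left,
      CStarModule.inner_sub_right, CStarModule.inner_smul_left_real,
      CStarModule.inner_smul_right_real, hy, smul_zero, sub_zero, ← hT.1 y (T y)] at this
    rw [← sub_nonneg]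
    convert this using 1
    module
  have hnorm : 2 * s * ‖b‖ ≤ ‖T‖ * ‖b‖ := by
    calc 2 * s * ‖b‖ = ‖(2 * s) • b‖ := by
          rw [norm_smul, Real.norm_of_nonneg (by positivity)]
      _ ≤ ‖(⟪T y, T (T y)⟫_A : A)‖ :=
          CStarAlgebra.norm_le_norm_of_nonneg_of_le (smul_nonneg (by positivity)
            CStarModule.inner_self_nonneg) hb
      _ ≤ ‖T y‖ * (‖T‖ * ‖T y‖) :=
          (CStarModule.norm_inner_le _ _).trans
            (mul_le_mul_of_nonneg_left (T.le_opNorm _) (norm_nonneg _))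
      _ = ‖T‖ * ‖b‖ := by rw [← CStarModule.norm_sq_eq A]; ring
  have hb0 : ‖b‖ = 0 := by nlinarith [norm_nonneg b, norm_nonneg T]
  rw [← norm_eq_zero, ← sq_eq_zero_iff, CStarModule.norm_sq_eq A, hb0]

lemma subMulSelf_iterate (hT : IsPositiveB A T)
    (hle : ∀ x : E, (⟪x, T x⟫_A : A) ≤ (1 / 2 : ℝ) • ⟪x, x⟫_A) (n : ℕ) :
    IsPositiveB A (subMulSelf^[n] T) ∧
      ∀ x : E, (⟪x, subMulSelf^[n] T x⟫_A : A) ≤ subMulSelf^[n] (1 / 2 : ℝ) • ⟪x, x⟫_A := by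
  induction n with
  | zero => exact ⟨hT, hle⟩
  | succ n ih =>
    obtain ⟨hpos, hbound⟩ := ih
    obtain ⟨hu0, hu⟩ := subMulSelf_iterate_half_mem n
    have hu' : subMulSelf^[n] (1 / 2 : ℝ) ≤ 1 / 2 :=
      hu.trans (by rw [div_le_div_iff₀ (by positivity) (by norm_num)]; linarith)
    rw [Function.iterate_succ_apply', Function.iterate_succ_apply']
    exact ⟨hpos.subMulSelf_of_le_one fun x =>
        (hbound x).trans (smul_le_of_le_one_left CStarModule.inner_self_nonneg (by linarith)),
      hpos.1.inner_sub_mul_self_apply_le hu' hbound⟩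

lemma smul (hT : IsPositiveB A T) {r : ℝ} (hr : 0 ≤ r) : IsPositiveB A (r • T) := by
  refine ⟨fun x y => ?_, fun x => ?_⟩
  · simp only [smul_apply, CStarModule.inner_smul_left_real,
      CStarModule.inner_smul_right_real, hT.1 x y]
  · rw [smul_apply, CStarModule.inner_smul_right_real]
    exact smul_nonneg hr (hT.2 x)

lemma inner_mul_apply_nonneg_of_le_half (hQ : IsPositiveB A Q) (hG : IsPositiveB A G)
    (hle : ∀ x : E, (⟪x, G x⟫_A : A) ≤ (1 / 2 : ℝ) • ⟪x, x⟫_A) (hQG : Commute Q G) (x : E) :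
    (0 : A) ≤ ⟪x, (Q * G) x⟫_A := by
  set Gₙ : ℕ → E →L[ℂ] E := fun n => subMulSelf^[n] G
  have hGₙ := hG.subMulSelf_iterate hle
  have hanti : Antitone fun n => (⟪x, (Q * Gₙ n) x⟫_A : A) := by
    refine antitone_nat_of_succ_le fun n => ?_
    have hstep : (⟪x, (Q * Gₙ (n + 1)) x⟫_A : A)
        = ⟪x, (Q * Gₙ n) x⟫_A - ⟪Gₙ n x, Q (Gₙ n x)⟫_A := by
      simp only [Gₙ, Function.iterate_succ_apply', subMulSelf, mul_sub, sub_apply,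
        CStarModule.inner_sub_right, ← mul_assoc, (hQG.subMulSelf_iterate n).eq]
      rw [(hGₙ n).1.1 x]
      rfl
    rw [hstep]
    exact sub_le_self _ (hQ.2 _)
  have hGₙx : Tendsto (fun n => Gₙ n x) atTop (𝓝 0) := by
    refine squeeze_zero_norm (a := fun n => √(subMulSelf^[n] (1 / 2 : ℝ)) * ‖x‖) (fun n => ?_) ?_
    · obtain ⟨hu0, hu⟩ := subMulSelf_iterate_half_mem n
      rw [← Real.sqrt_sq (norm_nonneg x), ← Real.sqrt_mul hu0]
      refine Real.le_sqrt_of_sq_le ((hGₙ n).1.norm_apply_sq_le hu0 ?_ (hGₙ n).2 x)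
      exact hu.trans (by rw [div_le_one (by positivity)]; linarith)
    · simpa using (tendsto_subMulSelf_iterate_half.sqrt).mul_const ‖x‖
  have htend : Tendsto (fun n => (⟪x, (Q * Gₙ n) x⟫_A : A)) atTop (𝓝 0) := by
    simpa [Function.comp_def, CStarModule.inner_zero_right] using
      (((CStarModule.continuous_inner_right A x).comp Q.continuous).tendsto 0).comp hGₙx
  exact le_of_tendsto' htend fun n => hanti (Nat.zero_le n)

theorem inner_mul_apply_nonneg (hQ : IsPositiveB A Q) (hG : IsPositiveB A G) {c : ℝ}
    (hc : 0 ≤ c) (hle : ∀ x : E, (⟪x, G x⟫_A : A) ≤ c • ⟪x, x⟫_A) (hQG : Commute Q G)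
    (x : E) : (0 : A) ≤ ⟪x, (Q * G) x⟫_A := by
  set r : ℝ := (2 * c + 1)⁻¹
  have hr : 0 < r := by positivity
  have hrle : ∀ y : E, (⟪y, (r • G) y⟫_A : A) ≤ (1 / 2 : ℝ) • ⟪y, y⟫_A := by
    intro y
    rw [smul_apply, CStarModule.inner_smul_right_real]
    refine (smul_le_smul_of_nonneg_left (hle y) hr.le).trans ?_
    rw [smul_smul]
    refine smul_le_smul_of_nonneg_right ?_ CStarModule.inner_self_nonneg
    rw [inv_mul_le_iff₀ (by positivity)]
    linarith
  have h := hQ.inner_mul_apply_nonneg_of_le_half (hG.smul hr.le) hrle (hQG.smul_right r) x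
  rw [mul_smul_comm, smul_apply, CStarModule.inner_smul_right_real] at h
  simpa [hr.ne'] using smul_nonneg (inv_nonneg.mpr hr.le) h

lemma apply_eq_zero_of_anticommute (hQ : IsPositiveB A Q)
    (hN : IsAdjointableB A N N) (hQN : Q * N = -(N * Q)) {c : ℝ} (hc : 0 ≤ c)
    (hle : ∀ x : E, (⟪N x, N x⟫_A : A) ≤ c • ⟪x, x⟫_A) (x : E) : Q (N x) = 0 := by
  have hNN : IsPositiveB A (N * N) :=
    ⟨fun x y => by simp only [mul_apply_eq_comp, hN _ y, hN x],
      fun x => by rw [mul_apply_eq_comp, ← hN]; exact CStarModule.inner_self_nonneg⟩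
  have hcomm : Commute Q (N * N) := by
    simp only [Commute, SemiconjBy, ← mul_assoc, hQN, neg_mul]
    rw [mul_assoc N, hQN, mul_neg, neg_neg, mul_assoc]
  -- `Q N²` is positive as a product of commuting positives, and `-N Q N` is negative
  have hpos := hQ.inner_mul_apply_nonneg hNN hc
    (fun y => by rw [mul_apply_eq_comp, ← hN]; exact hle y) hcomm x
  rw [← mul_assoc, hQN, mul_apply_eq_comp, neg_apply, mul_apply_eq_comp,
    CStarModule.inner_neg_right, ← hN, neg_nonneg] at hpos
  exact hQ.apply_eq_zero_of_inner_eq_zero (le_antisymm hpos (hQ.2 _))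

end IsPositiveB

end PositiveOperators

namespace UnboundedOp

variable {t : UnboundedOp A E}

lemma app_congr {x y : E} (hx : x ∈ t.dom) (hy : y ∈ t.dom) (h : x = y) :
    t.app x hx = t.app y hy := by
  subst h; rfl

lemma app_zero (h : (0 : E) ∈ t.dom) : t.app 0 h = 0 := map_zero t.toFun

lemma app_sub {x y : E} (hx : x ∈ t.dom) (hy : y ∈ t.dom) (hxy : x - y ∈ t.dom) :
    t.app (x - y) hxy = t.app x hx - t.app y hy :=
  map_sub t.toFun ⟨x, hx⟩ ⟨y, hy⟩

lemma app_smul (c : ℂ) {x : E} (hx : x ∈ t.dom) (hcx : c • x ∈ t.dom) :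
    t.app (c • x) hcx = c • t.app x hx :=
  map_smul t.toFun c ⟨x, hx⟩

def IsSymmetric (t : UnboundedOp A E) : Prop :=
  ∀ x (hx : x ∈ t.dom) y (hy : y ∈ t.dom), (⟪t.app x hx, y⟫_A : A) = ⟪x, t.app y hy⟫_A

lemma IsSelfAdjointRegular.isSymmetric (ht : t.IsSelfAdjointRegular) : t.IsSymmetric :=
  ht.2.2.1.1

namespace IsResolventSq

variable {S : E →L[ℂ] E}

lemma mem_dom (hS : t.IsResolventSq t S) (x : E) : S x ∈ t.dom := (hS.1 x).1

lemma app_mem_dom (hS : t.IsResolventSq t S) (x : E) : t.app (S x) (hS.mem_dom x) ∈ t.dom :=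
  (hS.1 x).2.1

lemma app_app_add (hS : t.IsResolventSq t S) (x : E) :
    t.app (t.app (S x) (hS.mem_dom x)) (hS.app_mem_dom x) + S x = x :=
  (hS.1 x).2.2

lemma app_app (hS : t.IsResolventSq t S) (x : E) :
    t.app (t.app (S x) (hS.mem_dom x)) (hS.app_mem_dom x) = x - S x :=
  eq_sub_of_add_eq (hS.app_app_add x)

lemma apply_app (hS : t.IsResolventSq t S) {x : E} (hx : x ∈ t.dom) :
    S (t.app x hx) = t.app (S x) (hS.mem_dom x) := by
  have hmem : t.app (t.app (S x) (hS.mem_dom x)) (hS.app_mem_dom x) ∈ t.dom := by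
    rw [hS.app_app]; exact sub_mem hx (hS.mem_dom x)
  have h := hS.2 _ (hS.app_mem_dom x) hmem
  rwa [app_congr hmem (sub_mem hx (hS.mem_dom x)) (hS.app_app x),
    app_sub hx (hS.mem_dom x), add_sub_cancel] at h

lemma eq_zero_of_apply_eq_zero (hS : t.IsResolventSq t S) {x : E} (h : S x = 0) : x = 0 := by
  have h0 : t.app (S x) (hS.mem_dom x) = 0 := by
    rw [app_congr _ (zero_mem _) h, app_zero]
  rw [← hS.app_app_add x, app_congr _ (zero_mem _) h0, app_zero, h, add_zero]

lemma inner_apply_right (hS : t.IsResolventSq t S) (ht : t.IsSymmetric) (x y : E) :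
    (⟪x, S y⟫_A : A) =
      ⟪S x, S y⟫_A + ⟪t.app (S x) (hS.mem_dom x), t.app (S y) (hS.mem_dom y)⟫_A := by
  conv_lhs => rw [← hS.app_app_add x]
  rw [CStarModule.inner_add_left, ht _ (hS.app_mem_dom x), add_comm]

lemma inner_sub_apply_right (hS : t.IsResolventSq t S) (ht : t.IsSymmetric) (x y : E) :
    (⟪x, y - S y⟫_A : A) =
      ⟪t.app (S x) (hS.mem_dom x), t.app (S y) (hS.mem_dom y)⟫_A +
        ⟪t.app (t.app (S x) _) (hS.app_mem_dom x), t.app (t.app (S y) _) (hS.app_mem_dom y)⟫_A := by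
  conv_lhs => rw [← hS.app_app_add x, ← hS.app_app y]
  rw [CStarModule.inner_add_left, ← ht _ (hS.mem_dom x), add_comm]

lemma inner_app_left (hS : t.IsResolventSq t S) (ht : t.IsSymmetric) (x y : E) :
    (⟪t.app (S x) (hS.mem_dom x), y⟫_A : A) = ⟪x, t.app (S y) (hS.mem_dom y)⟫_A := by
  conv_lhs => rw [← hS.app_app_add y]
  conv_rhs => rw [← hS.app_app_add x]
  rw [CStarModule.inner_add_right, CStarModule.inner_add_left,
    ht _ (hS.app_mem_dom x) _ (hS.app_mem_dom y), ht _ (hS.mem_dom x) _ (hS.mem_dom y)]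

lemma inner_apply_self_nonneg (hS : t.IsResolventSq t S) (ht : t.IsSymmetric) (x : E) :
    (0 : A) ≤ ⟪x, S x⟫_A := by
  rw [hS.inner_apply_right ht]
  exact add_nonneg CStarModule.inner_self_nonneg CStarModule.inner_self_nonneg

lemma inner_apply_self_le (hS : t.IsResolventSq t S) (ht : t.IsSymmetric) (x : E) :
    (⟪x, S x⟫_A : A) ≤ ⟪x, x⟫_A := by
  rw [← sub_nonneg, ← CStarModule.inner_sub_right, hS.inner_sub_apply_right ht]
  exact add_nonneg CStarModule.inner_self_nonneg CStarModule.inner_self_nonneg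

lemma inner_app_self_le (hS : t.IsResolventSq t S) (ht : t.IsSymmetric) (x : E) :
    (⟪t.app (S x) (hS.mem_dom x), t.app (S x) (hS.mem_dom x)⟫_A : A) ≤ ⟪x, x⟫_A := by
  refine le_trans ?_ (hS.inner_apply_self_le ht x)
  rw [hS.inner_apply_right ht]
  exact le_add_of_nonneg_left CStarModule.inner_self_nonneg

lemma inner_app_apply_app (hS : t.IsResolventSq t S) (ht : t.IsSymmetric) {y : E}
    (hy : y ∈ t.dom) : (⟪t.app y hy, S (t.app y hy)⟫_A : A) = ⟪y, y⟫_A - ⟪y, S y⟫_A := by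
  rw [hS.apply_app hy, ht y hy _ (hS.app_mem_dom y), hS.app_app, CStarModule.inner_sub_right]

lemma resolvent_apply (hS : t.IsResolventSq t S) {R : E →L[ℂ] E}
    (hR : t.IsResolvent Complex.I R) (x : E) :
    R x = t.app (S x) (hS.mem_dom x) - Complex.I • S x := by
  have hmem : Complex.I • S x ∈ t.dom := t.dom.smul_mem _ (hS.mem_dom x)
  have hy : t.app (S x) (hS.mem_dom x) - Complex.I • S x ∈ t.dom :=
    sub_mem (hS.app_mem_dom x) hmem
  -- `(t + i)(t - i) S = (1 + t²) S = 1`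
  have h := hR.2 _ hy
  rwa [app_sub (hS.app_mem_dom x) hmem, app_smul _ (hS.mem_dom x), hS.app_app, smul_sub,
    smul_smul, Complex.I_mul_I, neg_one_smul, sub_add_sub_cancel, sub_neg_eq_add,
    sub_add_cancel] at h

end IsResolventSq

lemma IsCayley.add_apply {S C : E →L[ℂ] E} (hS : t.IsResolventSq t S) (hC : t.IsCayley C)
    (x : E) : x + C x = (2 : ℂ) • (x - S x - Complex.I • t.app (S x) (hS.mem_dom x)) := by
  obtain ⟨R, hR, hCR⟩ := hC
  obtain ⟨hRx, hCx⟩ := hCR x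
  have htR : t.app (R x) hRx = x - S x - Complex.I • t.app (S x) (hS.mem_dom x) := by
    have hmem : Complex.I • S x ∈ t.dom := t.dom.smul_mem _ (hS.mem_dom x)
    rw [app_congr hRx (sub_mem (hS.app_mem_dom x) hmem) (hS.resolvent_apply hR x),
      app_sub (hS.app_mem_dom x) hmem, app_smul _ (hS.mem_dom x), hS.app_app]
  -- `C = (t - i)(t + i)⁻¹ = 1 - 2 i (t + i)⁻¹`
  have hIR : Complex.I • R x = x - t.app (R x) hRx := eq_sub_of_add_eq' (hR.1 x).2
  rw [hCx, hIR, ← htR, two_smul]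
  abel

variable {Q F : E →L[ℂ] E}

lemma IsSqrtResolvent.isPositiveB (hQ : t.IsSqrtResolvent t Q) : IsPositiveB A Q :=
  ⟨hQ.1, hQ.2.1⟩

lemma IsSqrtResolvent.isResolventSq (hQ : t.IsSqrtResolvent t Q) : t.IsResolventSq t (Q * Q) :=
  hQ.2.2

namespace IsBoundedTransform

lemma mem_dom (hF : t.IsBoundedTransform Q F) (x : E) : Q x ∈ t.dom := (hF x).1

lemma apply_eq (hF : t.IsBoundedTransform Q F) (x : E) : F x = t.app (Q x) (hF.mem_dom x) :=
  (hF x).2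

lemma isAdjointableB_mul (ht : t.IsSymmetric) (hQ : t.IsSqrtResolvent t Q)
    (hF : t.IsBoundedTransform Q F) : IsAdjointableB A (Q * F) (Q * F) := fun x y => by
  simp only [mul_apply_eq_comp, hQ.1 _ y, ← hQ.1 x, hF.apply_eq]
  exact ht _ (hF.mem_dom x) _ (hF.mem_dom y)

lemma isAdjointableB_mul_swap (ht : t.IsSymmetric) (hQ : t.IsSqrtResolvent t Q)
    (hF : t.IsBoundedTransform Q F) : IsAdjointableB A (F * Q) (F * Q) := fun x y => by
  simpa only [mul_apply_eq_comp, hF.apply_eq] using hQ.isResolventSq.inner_app_left ht x y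

lemma mul_self_mul_comm (hQ : t.IsSqrtResolvent t Q) (hF : t.IsBoundedTransform Q F) :
    Q * Q * F = F * (Q * Q) := by
  ext x
  simp only [mul_apply_eq_comp, hF.apply_eq]
  exact hQ.isResolventSq.apply_app (hF.mem_dom x)

lemma inner_mul_apply_self_le (ht : t.IsSymmetric) (hQ : t.IsSqrtResolvent t Q)
    (hF : t.IsBoundedTransform Q F) (x : E) :
    (⟪(Q * F) x, (Q * F) x⟫_A : A) ≤ ⟪x, x⟫_A := by
  have hS := hQ.isResolventSq
  calc (⟪(Q * F) x, (Q * F) x⟫_A : A)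
      = ⟪t.app (Q x) (hF.mem_dom x), (Q * Q) (t.app (Q x) (hF.mem_dom x))⟫_A := by
        rw [mul_apply_eq_comp, hQ.1, hF.apply_eq]; rfl
    _ = ⟪Q x, Q x⟫_A - ⟪Q x, (Q * Q) (Q x)⟫_A := by
        rw [hS.inner_app_apply_app ht]
    _ ≤ ⟪Q x, Q x⟫_A := sub_le_self _ (hS.inner_apply_self_nonneg ht _)
    _ ≤ ⟪x, x⟫_A := by
        rw [hQ.1]; exact hS.inner_apply_self_le ht x

lemma inner_mul_swap_apply_self_le (ht : t.IsSymmetric) (hQ : t.IsSqrtResolvent t Q)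
    (hF : t.IsBoundedTransform Q F) (x : E) :
    (⟪(F * Q) x, (F * Q) x⟫_A : A) ≤ ⟪x, x⟫_A := by
  simpa only [mul_apply_eq_comp, hF.apply_eq] using hQ.isResolventSq.inner_app_self_le ht x

theorem commute (ht : t.IsSymmetric) (hQ : t.IsSqrtResolvent t Q)
    (hF : t.IsBoundedTransform Q F) : Commute Q F := by
  set N := Q * F - F * Q
  have hN : IsAdjointableB A N N := fun x y => by
    simp only [N, sub_apply, CStarModule.inner_sub_left, CStarModule.inner_sub_right,
      isAdjointableB_mul ht hQ hF x y, isAdjointableB_mul_swap ht hQ hF x y]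
  have hQN : Q * N = -(N * Q) := by
    have h := mul_self_mul_comm hQ hF
    simp only [N, mul_sub, sub_mul, mul_assoc] at h ⊢
    rw [h]
    abel
  have hle : ∀ x : E, (⟪N x, N x⟫_A : A) ≤ (4 : ℝ) • ⟪x, x⟫_A := fun x => by
    refine (CStarModule.inner_sub_sub_self_le _ _).trans ?_
    calc (2 : ℝ) • (⟪(Q * F) x, (Q * F) x⟫_A : A) + (2 : ℝ) • ⟪(F * Q) x, (F * Q) x⟫_A
        ≤ (2 : ℝ) • ⟪x, x⟫_A + (2 : ℝ) • ⟪x, x⟫_A := by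
          gcongr
          · exact inner_mul_apply_self_le ht hQ hF x
          · exact inner_mul_swap_apply_self_le ht hQ hF x
      _ = (4 : ℝ) • ⟪x, x⟫_A := by module
  have hNx : ∀ x, N x = 0 := fun x => hQ.isResolventSq.eq_zero_of_apply_eq_zero <| by
    rw [mul_apply_eq_comp,
      hQ.isPositiveB.apply_eq_zero_of_anticommute hN hQN (by norm_num) hle x, map_zero]
  exact sub_eq_zero.mp (ContinuousLinearMap.ext hNx)

theorem mul_self (ht : t.IsSymmetric) (hQ : t.IsSqrtResolvent t Q)
    (hF : t.IsBoundedTransform Q F) : F * F = 1 - Q * Q := by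
  ext x
  have hQF : Q (F x) = t.app ((Q * Q) x) (hQ.isResolventSq.mem_dom x) := by
    rw [← mul_apply_eq_comp, (commute ht hQ hF).eq, mul_apply_eq_comp, hF.apply_eq]; rfl
  rw [mul_apply_eq_comp, hF.apply_eq, app_congr _ (hQ.isResolventSq.app_mem_dom x) hQF,
    hQ.isResolventSq.app_app]
  rfl

end IsBoundedTransform

end UnboundedOp

/-- For a selfadjoint regular operator `t` with Cayley transform `C`,
bounded transform `F` and `Q = (1+t²)^(-1/2)`, one has `I + C = 2 F (F - i Q)`. -/
theorem one_add_cayley_eq_two_mul_boundedTransform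
    (t : UnboundedOp A E) (ht : t.IsSelfAdjointRegular)
    (Q F C : E →L[ℂ] E) (hQ : t.IsSqrtResolvent t Q) (hF : t.IsBoundedTransform Q F)
    (hC : t.IsCayley C) :
    (1 : E →L[ℂ] E) + C = (2 : ℂ) • (F * (F - Complex.I • Q)) := by
  have hFF := hF.mul_self ht.isSymmetric hQ
  ext x
  rw [add_apply, one_apply_eq_self, hC.add_apply hQ.isResolventSq x]
  simp only [smul_apply, mul_apply_eq_comp, sub_apply, map_sub, map_smul, ← hF.apply_eq,
    ← mul_apply_eq_comp F F, hFF, one_apply_eq_self]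

end RegularFredholm
end
end

section
/- Let t be a selfadjoint regular operator on a Hilbert C*-module E and D a selfadjoint bounded adjointable operator on E. Then C_{t+D} - C_t = (I - C_t) D (D + t + i)^{-1}, where C_s denotes the Cayley transform of a selfadjoint regular operator s. -/
/-! Framework: unbounded (regular) operators on Hilbert C⋆-modules, bounded adjointable
operators, compact operators, Fredholm operators, Cayley and bounded transforms. -/

open scoped RightActions InnerProductSpace

noncomputable section

namespace RegularFredholm

/-- A right Hilbert C⋆-module over `A` is a (current Mathlib, left) Hilbert C⋆-module over
`Aᵐᵒᵖ`, with inner product `MulOpposite.op ⟪x, y⟫_A`. Used only to obtain the normed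
structure on `E × E` below. -/
instance instCStarModuleMulOpposite {A : Type*} [NonUnitalCStarAlgebra A] [PartialOrder A]
    {E : Type*} [NormedAddCommGroup E] [NormedSpace ℂ E] [SMul Aᵐᵒᵖ E] [CStarModule A E] :
    _root_.CStarModule Aᵐᵒᵖ E where
  inner x y := MulOpposite.op (⟪x, y⟫_A : A)
  inner_add_right := by simp [CStarModule.inner_add_right]
  inner_self_nonneg := by
    intro x
    show (0 : A) ≤ _
    exact CStarModule.inner_self_nonneg
  inner_self := by simp [CStarModule.inner_self]
  inner_op_smul_right := by
    intro a x y
    have := CStarModule.inner_op_smul_right (A := A) (a := a.unop) (x := x) (y := y)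
    simp only [MulOpposite.op_unop] at this
    rw [this]; simp
  inner_smul_right_complex := by simp [CStarModule.inner_smul_right_complex]
  star_inner x y := by
    show MulOpposite.op (star (⟪x, y⟫_A : A)) = _
    rw [CStarModule.star_inner]
  norm_eq_sqrt_norm_inner_self x := by
    rw [CStarModule.norm_eq_sqrt_norm_inner_self (A := A) x]
    exact congrArg Real.sqrt (MulOpposite.norm_op _).symm

section ProdInstances

variable {A : Type*} [NonUnitalCStarAlgebra A] [PartialOrder A] [StarOrderedRing A]
variable {E : Type*} [NormedAddCommGroup E] [NormedSpace ℂ E] [SMul Aᵐᵒᵖ E] [CStarModule A E]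

/-- The norm `‖x‖ = √‖⟪x.1, x.1⟫_A + ⟪x.2, x.2⟫_A‖` on `E × E` as a Hilbert C⋆-module. -/
noncomputable instance : NormedAddCommGroup (WithCStarModule A (E × E)) :=
  (inferInstance : NormedAddCommGroup (WithCStarModule Aᵐᵒᵖ (E × E)))

noncomputable instance : NormedSpace ℂ (WithCStarModule A (E × E)) :=
  (inferInstance : NormedSpace ℂ (WithCStarModule Aᵐᵒᵖ (E × E)))

/-- `E × E` is a Hilbert C⋆-module over `A`, with `⟪x, y⟫_A = ⟪x.1, y.1⟫_A + ⟪x.2, y.2⟫_A`. -/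
noncomputable instance : CStarModule A (WithCStarModule A (E × E)) where
  inner x y := ⟪x.1, y.1⟫_A + ⟪x.2, y.2⟫_A
  inner_add_right := by
    intro x y z
    simp only [WithCStarModule.add_fst, WithCStarModule.add_snd, CStarModule.inner_add_right]
    abel
  inner_self_nonneg := add_nonneg CStarModule.inner_self_nonneg CStarModule.inner_self_nonneg
  inner_self := by
    intro x
    refine ⟨fun h => ?_, fun h => by subst h; simp [(CStarModule.inner_self (A := A)).2]⟩
    apply (WithCStarModule.equiv A (E × E)).injective
    ext
    · refine CStarModule.inner_self.mp <| le_antisymm ?_ (CStarModule.inner_self_nonneg (A := A))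
      exact le_add_of_nonneg_right CStarModule.inner_self_nonneg |>.trans_eq h
    · refine CStarModule.inner_self.mp <| le_antisymm ?_ (CStarModule.inner_self_nonneg (A := A))
      exact le_add_of_nonneg_left CStarModule.inner_self_nonneg |>.trans_eq h
  inner_op_smul_right := by
    intro a x y
    show ⟪x.1, y.1 <• a⟫_A + ⟪x.2, y.2 <• a⟫_A = _
    simp [CStarModule.inner_op_smul_right, add_mul]
  inner_smul_right_complex := by
    intro z x y
    show ⟪x.1, z • y.1⟫_A + ⟪x.2, z • y.2⟫_A = _
    simp [CStarModule.inner_smul_right_complex, smul_add]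
  star_inner x y := by
    show star (⟪x.1, y.1⟫_A + ⟪x.2, y.2⟫_A) = ⟪y.1, x.1⟫_A + ⟪y.2, x.2⟫_A
    simp [CStarModule.star_inner]
  norm_eq_sqrt_norm_inner_self x := by
    show √‖MulOpposite.op (⟪x.1, x.1⟫_A : A) + MulOpposite.op ⟪x.2, x.2⟫_A‖ = _
    rw [← MulOpposite.op_add, MulOpposite.norm_op]

end ProdInstances


variable {A : Type*} [NonUnitalCStarAlgebra A] [PartialOrder A] [StarOrderedRing A]
variable {E : Type*} [NormedAddCommGroup E] [NormedSpace ℂ E] [SMul Aᵐᵒᵖ E] [CStarModule A E]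

namespace UnboundedOp

@[simp]
theorem addBounded_app (t : UnboundedOp A E) (D : E →L[ℂ] E) (x : E)
    (hx : x ∈ (t.addBounded D).dom) :
    (t.addBounded D).app x hx = t.app x hx + D x :=
  rfl

theorem IsResolvent.eq {t : UnboundedOp A E} {c : ℂ} {R R' : E →L[ℂ] E}
    (hR : t.IsResolvent c R) (hR' : t.IsResolvent c R') : R = R' := by
  ext x
  obtain ⟨hx, hRx⟩ := hR.1 x
  conv_rhs => rw [← hRx]
  exact (hR'.2 _ hx).symm

theorem IsCayley.eq_one_sub_smul_resolvent {t : UnboundedOp A E} {C R : E →L[ℂ] E}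
    (hC : t.IsCayley C) (hR : t.IsResolvent Complex.I R) :
    C = 1 - (2 * Complex.I) • R := by
  obtain ⟨R₀, hR₀, hCR₀⟩ := hC
  obtain rfl := hR₀.eq hR
  ext x
  obtain ⟨hx, hCx⟩ := hCR₀ x
  obtain ⟨_, hRx⟩ := hR₀.1 x
  rw [hCx, eq_sub_of_add_eq hRx]
  simp only [sub_apply, one_apply_eq_self, smul_apply]
  module

theorem IsResolvent.sub_addBounded {t : UnboundedOp A E} {D : E →L[ℂ] E} {c : ℂ}
    {R R' : E →L[ℂ] E} (hR : t.IsResolvent c R) (hR' : (t.addBounded D).IsResolvent c R') :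
    R - R' = R * (D * R') := by
  ext x
  obtain ⟨hx, hR'x⟩ := hR'.1 x
  rw [addBounded_app, add_right_comm] at hR'x
  calc R x - R' x = R (t.app (R' x) hx + c • R' x + D (R' x)) - R' x := by rw [hR'x]
    _ = R (D (R' x)) := by rw [map_add, hR.2 _ hx, add_sub_cancel_left]

end UnboundedOp

theorem cayley_addBounded_sub_cayley_general
    (t : UnboundedOp A E)
    (D : E →L[ℂ] E)
    (C C' R' : E →L[ℂ] E) (hC : t.IsCayley C) (hC' : (t.addBounded D).IsCayley C')
    (hR' : (t.addBounded D).IsResolvent Complex.I R') :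
    C' - C = (1 - C) * (D * R') := by
  obtain ⟨R, hR, -⟩ := id hC
  rw [hC.eq_one_sub_smul_resolvent hR, hC'.eq_one_sub_smul_resolvent hR', sub_sub_sub_cancel_left,
    sub_sub_cancel, smul_mul_assoc, ← smul_sub, hR.sub_addBounded hR']

/-- For a selfadjoint regular operator `t` and a selfadjoint bounded
adjointable operator `D`, one has `C_{t+D} - C_t = (I - C_t) D (D + t + i)⁻¹`. -/
theorem cayley_addBounded_sub_cayley
    (t : UnboundedOp A E) (ht : t.IsSelfAdjointRegular)
    (D : E →L[ℂ] E) (hD : IsAdjointableB A D D)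
    (C C' R' : E →L[ℂ] E) (hC : t.IsCayley C) (hC' : (t.addBounded D).IsCayley C')
    (hR' : (t.addBounded D).IsResolvent Complex.I R') :
    C' - C = (1 - C) * (D * R') :=
  cayley_addBounded_sub_cayley_general t D C C' R' hC hC' hR'

end RegularFredholm
end
end
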